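/- For any S ⊆ H with |S| > 1 and any query tree T whose leaves contain S, there exists a question q_i with Δ_i(S, π_S)/c_i ≥ (1 − CP(π_S)) / C(T, π_S). -/

import Mathlib

open Finset

namespace ActiveLearning

variable {H A : Type*} {m : ℕ}

/-- The total mass of a weight function `v` on a finite set `S`. -/
def mass (v : H → ℝ) (S : Finset H) : ℝ := ∑ s ∈ S, v s

/-- `v` restricted to `S` and normalized. -/
noncomputable def restrict [DecidableEq H] (v : H → ℝ) (S : Finset H) : H → ℝ :=
  fun h => if h ∈ S then v h / mass v S else 0

/-- The shrinkage `Δ` of a question `qi` on `(S, v)`. -/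
noncomputable def shrink [Fintype A] [DecidableEq A] (qi : H → A)
    (S : Finset H) (v : H → ℝ) : ℝ :=
  mass v S - ∑ j : A, (mass v (S.filter fun s => qi s = j)) ^ 2 / mass v S

/-- The collision probability of a distribution `v`. -/
def CP [Fintype H] (v : H → ℝ) : ℝ := ∑ z : H, (v z) ^ 2

/-- Query trees: internal nodes are questions (indexed by `Fin m`), branches are answers,
leaves are hypotheses. -/
inductive QTree (m : ℕ) (H A : Type*) : Type _
  | leaf : H → QTree m H A
  | node : Fin m → (A → QTree m H A) → QTree m H A

/-- Follow the answers of hypothesis `h` down the tree, returning the leaf reached. -/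
def follow (q : Fin m → H → A) : QTree m H A → H → H
  | .leaf h', _ => h'
  | .node i ch, h => follow q (ch (q i h)) h

/-- The cost `c_T(h)`: sum of costs of the questions on the root-to-`h` path. -/
def pathCost (q : Fin m → H → A) (c : Fin m → ℝ) : QTree m H A → H → ℝ
  | .leaf _, _ => 0
  | .node i ch, h => c i + pathCost q c (ch (q i h)) h

/-- The leaves of `T` include `S`: every `h ∈ S` is identified by `T`. -/
def ValidOn (q : Fin m → H → A) (T : QTree m H A) (S : Finset H) : Prop :=
  ∀ h ∈ S, follow q T h = h

/-- The expected cost `C(T, v)` of a query tree `T` under weights `v`. -/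
noncomputable def treeCost [Fintype H] (q : Fin m → H → A) (c : Fin m → ℝ)
    (T : QTree m H A) (v : H → ℝ) : ℝ :=
  ∑ h : H, v h * pathCost q c T h

/-- The questions asked along the root-to-`h` path. -/
def pathQs (q : Fin m → H → A) : QTree m H A → H → List (Fin m)
  | .leaf _, _ => []
  | .node i ch, h => i :: pathQs q (ch (q i h)) h

/-- `T` is a greedy query tree for `π` on version space `S`: at every node it asks a question
maximizing the shrinkage-cost ratio and recurses on each nonempty answer class. -/
inductive IsGreedy [Fintype A] [DecidableEq A] [DecidableEq H]
    (q : Fin m → H → A) (c : Fin m → ℝ) (π : H → ℝ) :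
    QTree m H A → Finset H → Prop
  | leaf (h : H) : IsGreedy q c π (.leaf h) {h}
  | node (S : Finset H) (i : Fin m) (ch : A → QTree m H A)
      (hcard : 1 < S.card)
      (hmax : ∀ j : Fin m,
        shrink (q j) S (restrict π S) / c j ≤ shrink (q i) S (restrict π S) / c i)
      (hch : ∀ a : A, (S.filter fun s => q i s = a).Nonempty →
        IsGreedy q c π (ch a) (S.filter fun s => q i s = a)) :
      IsGreedy q c π (.node i ch) S

/-- `T` is an `ε`-approximate greedy query tree for `π` on version space `S`. -/
inductive IsApproxGreedy [Fintype A] [DecidableEq A] [DecidableEq H]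
    (ε : ℝ) (q : Fin m → H → A) (c : Fin m → ℝ) (π : H → ℝ) :
    QTree m H A → Finset H → Prop
  | leaf (h : H) : IsApproxGreedy ε q c π (.leaf h) {h}
  | node (S : Finset H) (i : Fin m) (ch : A → QTree m H A)
      (hcard : 1 < S.card)
      (happrox : ∀ j : Fin m,
        (1 - ε) * (shrink (q j) S (restrict π S) / c j) ≤
          shrink (q i) S (restrict π S) / c i)
      (hch : ∀ a : A, (S.filter fun s => q i s = a).Nonempty →
        IsApproxGreedy ε q c π (ch a) (S.filter fun s => q i s = a)) :
      IsApproxGreedy ε q c π (.node i ch) S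

/-- `T` is irreducible on version space `S`: every asked question strictly splits the
surviving set. -/
inductive Irreducible [DecidableEq A] (q : Fin m → H → A) :
    QTree m H A → Finset H → Prop
  | leaf (h : H) (S : Finset H) : Irreducible q (.leaf h) S
  | node (S : Finset H) (i : Fin m) (ch : A → QTree m H A)
      (hsplit : ∃ s ∈ S, ∃ t ∈ S, q i s ≠ q i t)
      (hch : ∀ a : A, (S.filter fun s => q i s = a).Nonempty →
        Irreducible q (ch a) (S.filter fun s => q i s = a)) :
      Irreducible q (.node i ch) S

/-
Write `Δ_i(S)` for the unnormalized shrinkage and `P(R) = π(R)² − Σ_{h∈R} π(h)²` for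
the mass of ordered pairs of distinct elements of `R`. The shrinkage is monotone in the version
space, because `Δ_i(R) = Σ_j π(R^j) π(R∖R^j) / (π(R^j) + π(R∖R^j))` and `xy/(x+y)` is monotone in
both arguments. Hence if `Δ_i(S) ≤ c_i M` for every question, an induction over any tree `T`
identifying `R ⊆ S` gives `P(R) ≤ M · Σ_{h∈R} π(h) c_T(h)`: a node asking `q_i` splits off
`P(R) − Σ_j P(R^j) = π(R) Δ_i(R) ≤ π(R) c_i M`, which is paid for by the cost `c_i` of that node.
Applied to `π_S` with `M = max_i Δ_i(S, π_S)/c_i` this is `1 − CP(π_S) ≤ M · C(T, π_S)`.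
-/

lemma mul_div_add_le_mul_div_add {x y x' y' : ℝ} (hx : 0 ≤ x) (hy : 0 ≤ y)
    (hxx' : x ≤ x') (hyy' : y ≤ y') : x * y / (x + y) ≤ x' * y' / (x' + y') := by
  rcases (add_nonneg hx hy).eq_or_lt with hxy | hxy
  · rw [← hxy, div_zero]
    exact div_nonneg (mul_nonneg (hx.trans hxx') (hy.trans hyy')) (by linarith)
  · rw [div_le_div_iff₀ hxy (by linarith)]
    nlinarith [mul_le_mul_of_nonneg_left hyy' (mul_nonneg hx (hx.trans hxx')),
      mul_le_mul_of_nonneg_left hxx' (mul_nonneg hy (hy.trans hyy'))]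

section Mass

variable {v : H → ℝ}

lemma mass_nonneg (hv : ∀ h, 0 ≤ v h) (S : Finset H) : 0 ≤ mass v S :=
  sum_nonneg fun h _ => hv h

lemma mass_mono (hv : ∀ h, 0 ≤ v h) {R S : Finset H} (hRS : R ⊆ S) : mass v R ≤ mass v S :=
  sum_le_sum_of_subset_of_nonneg hRS fun h _ _ => hv h

lemma mass_restrict_self [DecidableEq H] {S : Finset H} (hS : mass v S ≠ 0) :
    mass (restrict v S) S = 1 := by
  rw [mass, sum_congr rfl fun h hh => show restrict v S h = v h / mass v S from if_pos hh,
    ← sum_div]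
  exact div_self hS

lemma restrict_nonneg [DecidableEq H] (hv : ∀ h, 0 ≤ v h) (S : Finset H) (h : H) :
    0 ≤ restrict v S h := by
  unfold restrict
  split_ifs
  exacts [div_nonneg (hv h) (mass_nonneg hv S), le_rfl]

end Mass

section Shrink

variable [Fintype A] [DecidableEq A] {qi : H → A} {v : H → ℝ}

lemma shrink_eq_sum (S : Finset H) :
    shrink qi S v = ∑ j,
      mass v (S.filter fun s => qi s = j) * mass v (S.filter fun s => qi s ≠ j) /
        (mass v (S.filter fun s => qi s = j) + mass v (S.filter fun s => qi s ≠ j)) := by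
  have hsplit : ∀ j, mass v (S.filter fun s => qi s = j) + mass v (S.filter fun s => qi s ≠ j)
      = mass v S := fun j => sum_filter_add_sum_filter_not S _ v
  have hfib : ∑ j, mass v (S.filter fun s => qi s = j) = mass v S := sum_fiberwise S qi v
  have hnot := fun j => eq_sub_of_add_eq' (hsplit j)
  rw [shrink]
  simp_rw [hsplit, hnot, ← sum_div, mul_sub, sum_sub_distrib, ← sum_mul, hfib, sub_div, ← sq]
  rw [sq, mul_self_div_self]

lemma shrink_mono (hv : ∀ h, 0 ≤ v h) {R S : Finset H} (hRS : R ⊆ S) :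
    shrink qi R v ≤ shrink qi S v := by
  rw [shrink_eq_sum, shrink_eq_sum]
  exact sum_le_sum fun j _ => mul_div_add_le_mul_div_add (mass_nonneg hv _) (mass_nonneg hv _)
    (mass_mono hv (filter_subset_filter _ hRS)) (mass_mono hv (filter_subset_filter _ hRS))

lemma shrink_nonneg (hv : ∀ h, 0 ≤ v h) (S : Finset H) : 0 ≤ shrink qi S v := by
  simpa [shrink, mass] using shrink_mono (qi := qi) hv (empty_subset S)

lemma mass_mul_shrink (hv : ∀ h, 0 ≤ v h) (S : Finset H) :
    mass v S * shrink qi S v = mass v S ^ 2 - ∑ j, mass v (S.filter fun s => qi s = j) ^ 2 := by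
  rcases eq_or_ne (mass v S) 0 with hS | hS
  · have hfib : ∀ j, mass v (S.filter fun s => qi s = j) = 0 := fun j =>
      le_antisymm (hS ▸ mass_mono hv (filter_subset _ S)) (mass_nonneg hv _)
    simp [hS, hfib]
  · rw [shrink, ← sum_div, mul_sub, mul_div_cancel₀ _ hS, sq]

end Shrink

section Tree

variable {q : Fin m → H → A} {c : Fin m → ℝ}

lemma ValidOn.child [DecidableEq A] {i : Fin m} {ch : A → QTree m H A} {R : Finset H}
    (hT : ValidOn q (.node i ch) R) (a : A) : ValidOn q (ch a) (R.filter fun s => q i s = a) := by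
  intro h hh
  rw [mem_filter] at hh
  simpa [follow, hh.2] using hT h hh.1

lemma ValidOn.exists_node {T : QTree m H A} {S : Finset H} (hT : ValidOn q T S)
    (hS : 1 < S.card) : ∃ i ch, T = .node i ch := by
  cases T with
  | node i ch => exact ⟨i, ch, rfl⟩
  | leaf h' =>
    obtain ⟨x, hx, y, hy, hxy⟩ := one_lt_card.1 hS
    exact absurd ((hT x hx).symm.trans (hT y hy)) hxy

lemma pathCost_nonneg (hc : ∀ i, 0 ≤ c i) (T : QTree m H A) (h : H) : 0 ≤ pathCost q c T h := by
  induction T with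
  | leaf => exact le_rfl
  | node i ch ih => exact add_nonneg (hc i) (ih _)

lemma treeCost_nonneg [Fintype H] {v : H → ℝ} (hc : ∀ i, 0 ≤ c i) (hv : ∀ h, 0 ≤ v h)
    (T : QTree m H A) : 0 ≤ treeCost q c T v :=
  sum_nonneg fun h _ => mul_nonneg (hv h) (pathCost_nonneg hc T h)

lemma sum_mul_pathCost_node [Fintype A] [DecidableEq A] (v : H → ℝ) (i : Fin m)
    (ch : A → QTree m H A) (R : Finset H) :
    ∑ h ∈ R, v h * pathCost q c (.node i ch) h =
      c i * mass v R + ∑ j, ∑ h ∈ R.filter (fun s => q i s = j), v h * pathCost q c (ch j) h := by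
  have hfib : ∑ j, ∑ h ∈ R.filter (fun s => q i s = j), v h * pathCost q c (ch j) h =
      ∑ h ∈ R, v h * pathCost q c (ch (q i h)) h := by
    rw [← sum_fiberwise R (q i)]
    exact sum_congr rfl fun j _ => sum_congr rfl fun h hh => by rw [(mem_filter.1 hh).2]
  rw [hfib, mass, mul_sum, ← sum_add_distrib]
  exact sum_congr rfl fun h _ => by rw [pathCost]; ring

lemma sq_mass_sub_sum_sq_le [Fintype A] [DecidableEq A] {v : H → ℝ} (hv : ∀ h, 0 ≤ v h)
    {S : Finset H} {M : ℝ} (hM : ∀ i, shrink (q i) S v ≤ c i * M) (T : QTree m H A)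
    {R : Finset H} (hRS : R ⊆ S) (hT : ValidOn q T R) :
    mass v R ^ 2 - ∑ h ∈ R, v h ^ 2 ≤ M * ∑ h ∈ R, v h * pathCost q c T h := by
  induction T generalizing R with
  | leaf h' =>
    rcases subset_singleton_iff.1 fun h hh => mem_singleton.2 (hT h hh).symm with rfl | rfl <;>
      simp [mass, pathCost]
  | node i ch ih =>
    have hroot : mass v R ^ 2 - ∑ j, mass v (R.filter fun s => q i s = j) ^ 2
        ≤ mass v R * (c i * M) := by
      rw [← mass_mul_shrink hv]
      exact mul_le_mul_of_nonneg_left ((shrink_mono hv hRS).trans (hM i)) (mass_nonneg hv R)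
    have hchildren := sum_le_sum fun j (_ : j ∈ univ) =>
      ih j ((filter_subset _ R).trans hRS) (hT.child j)
    rw [sum_mul_pathCost_node, ← sum_fiberwise R (q i) fun h => v h ^ 2]
    rw [sum_sub_distrib, ← mul_sum] at hchildren
    linarith

end Tree

lemma CP_restrict [Fintype H] [DecidableEq H] (v : H → ℝ) (S : Finset H) :
    CP (restrict v S) = ∑ h ∈ S, restrict v S h ^ 2 :=
  (sum_subset (subset_univ S) fun h _ hh => by simp [restrict, hh]).symm

lemma treeCost_restrict [Fintype H] [DecidableEq H] (q : Fin m → H → A) (c : Fin m → ℝ)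
    (T : QTree m H A) (v : H → ℝ) (S : Finset H) :
    treeCost q c T (restrict v S) = ∑ h ∈ S, restrict v S h * pathCost q c T h :=
  (sum_subset (subset_univ S) fun h _ hh => by simp [restrict, hh]).symm

theorem exists_good_shrink_general [Fintype H] [Fintype A] [DecidableEq H] [DecidableEq A]
    (π : H → ℝ) (hπpos : ∀ h, 0 < π h)
    (q : Fin m → H → A) (c : Fin m → ℝ) (hc : ∀ i, 0 < c i)
    (S : Finset H) (hS : 1 < S.card)
    (T : QTree m H A) (hT : ValidOn q T S) :
    ∃ i : Fin m,
      (1 - CP (restrict π S)) / treeCost q c T (restrict π S) ≤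
        shrink (q i) S (restrict π S) / c i := by
  have hv : ∀ h, 0 ≤ restrict π S h := restrict_nonneg (fun h => (hπpos h).le) S
  have hmass : mass (restrict π S) S = 1 :=
    mass_restrict_self (sum_pos (fun h _ => hπpos h) (card_pos.1 (by omega))).ne'
  obtain ⟨i₀, -, -⟩ := hT.exists_node hS
  obtain ⟨i, -, hi⟩ := exists_max_image univ (fun i => shrink (q i) S (restrict π S) / c i)
    ⟨i₀, mem_univ _⟩
  refine ⟨i, div_le_of_le_mul₀ (treeCost_nonneg (fun j => (hc j).le) hv T)
    (div_nonneg (shrink_nonneg hv S) (hc i).le) ?_⟩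
  have hM : ∀ j, shrink (q j) S (restrict π S) ≤ c j * (shrink (q i) S (restrict π S) / c i) :=
    fun j => (div_le_iff₀' (hc j)).1 (hi j (mem_univ j))
  simpa [hmass, CP_restrict, treeCost_restrict] using sq_mass_sub_sum_sq_le hv hM T subset_rfl hT

/-- For any `S ⊆ H` with `|S| > 1` and any query tree `T` whose leaves
contain `S`, there exists a question `q_i` with
`Δ_i(S, π_S)/c_i ≥ (1 − CP(π_S)) / C(T, π_S)`. -/
theorem exists_good_shrink [Fintype H] [Fintype A] [DecidableEq H] [DecidableEq A]
    (π : H → ℝ) (hπpos : ∀ h, 0 < π h) (hπsum : ∑ h : H, π h = 1)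
    (hH : 1 < Fintype.card H)
    (q : Fin m → H → A) (c : Fin m → ℝ) (hc : ∀ i, 0 < c i)
    (S : Finset H) (hS : 1 < S.card)
    (T : QTree m H A) (hT : ValidOn q T S) :
    ∃ i : Fin m,
      (1 - CP (restrict π S)) / treeCost q c T (restrict π S) ≤
        shrink (q i) S (restrict π S) / c i :=
  exists_good_shrink_general π hπpos q c hc S hS T hT

end ActiveLearning
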